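/- arXiv:1905.11466 — 2 statements merged into one kernel-verified Lean document; each statement's English description precedes it below -/
import Mathlib

section
/- Let {A^{(j)}} and {B^{(j)}} be as in the hypotheses of the perturbation lemma (with the bounds ε_j sqrt(#Br_j)((A^{(1)}···A^{(j)})_{v_0,w})^{-1} ∏_{k=1}^j (2‖A^{(k)}‖+1) ≤ 4^{-j} and |A^{(j)}_{v,w} − B^{(j)}_{v,w}| ≤ ε_j A^{(j)}_{v,w} for j ≥ N). Then for every φ in the inverse limit of {B^{(j)}} and every j ≥ N, the sequence {A^{(j)} A^{(j+1)} ··· A^{(j+k)} φ^{j+k}}_{k=1}^∞ is a Cauchy sequence in ℝ^{Br_{j-1}}; in fact consecutive terms differ in norm by at most K_N · 2^{-(j+k+1)} · φ^0 for a constant K_N depending only on the systems up to level N. -/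
/-!
Since `|A - B| ≤ ε A` with `ε < 1/2`, we have `B ≥ A / 2` entrywise from level `N` on, hence
`(B^{(1)} ⋯ B^{(M)})_{v₀w} ≥ c 2^{-M} (A^{(1)} ⋯ A^{(M)})_{v₀w}` for `M ≥ N` and some `c > 0`.
As `φ^0 = B^{(1)} ⋯ B^{(M)} φ^M` with everything nonnegative, this gives
`(A^{(1)} ⋯ A^{(M)})_{v₀w} φ^M_w ≤ c⁻¹ 2^M φ^0_{v₀}`.
Consecutive terms differ by `A^{(j)} ⋯ A^{(j+k-1)} (B - A)^{(j+k)} φ^{j+k+1}`, whose norm is at most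
`∏_{i ≤ j+k} ‖A^{(i)}‖ · ε_{j+k} √#V_{j+k+1} max_w φ^{j+k+1}_w`. The hypothesis on `ε` absorbs the
operator norms, the cardinality and the weight `(A^{(1)} ⋯ A^{(j+k+1)})_{v₀w}`, and trades
`2^{j+k+1}` for `4^{-(j+k+1)}`, leaving `c⁻¹ 2^{-(j+k+1)} φ^0_{v₀}`. Geometric decay of consecutive
differences makes the sequence Cauchy.
-/

open scoped BigOperators

variable (V : ℕ → Type) [∀ n, Fintype (V n)] [∀ n, DecidableEq (V n)]
  [∀ n, Nonempty (V n)] [Subsingleton (V 0)]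

/-- The product `A^{(1)} A^{(2)} ⋯ A^{(k)}` of the matrices of a projective matrix
system over the levels of a Bratteli diagram (with our indexing, `A j` is the matrix
over `V j × V (j+1)`). -/
def prodUpTo (A : ∀ j, Matrix (V j) (V (j + 1)) ℝ) : ∀ k, Matrix (V 0) (V k) ℝ
  | 0 => 1
  | k + 1 => prodUpTo A k * A k

/-- The inverse limit `lim_j A^{(j)}`: sequences of nonnegative vectors `ψ^j ∈ [0,∞)^{V j}`
with `ψ^j = A^{(j+1)} ψ^{j+1}`, as a subset of the product space `∏_j (V j → ℝ)`. -/
def limSet (A : ∀ j, Matrix (V j) (V (j + 1)) ℝ) : Set (∀ j, V j → ℝ) :=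
  {ψ | (∀ j v, 0 ≤ ψ j v) ∧ ∀ j, ψ j = (A j).mulVec (ψ (j + 1))}

/-- The Euclidean (`ℓ²`) norm of a vector. -/
noncomputable def eNorm {ι : Type} [Fintype ι] (x : ι → ℝ) : ℝ :=
  Real.sqrt (∑ i, (x i) ^ 2)

/-- The operator norm of a matrix for the Euclidean norms. -/
noncomputable def l2opNorm {ι κ : Type} [Fintype ι] [Fintype κ] (M : Matrix ι κ ℝ) : ℝ :=
  sSup {c | ∃ x : κ → ℝ, eNorm x ≤ 1 ∧ c = eNorm (M.mulVec x)}

/-- The segment product `A^{(j+1)} A^{(j+2)} ⋯ A^{(j+k)}` of a matrix system. -/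
def segProd (A : ∀ j, Matrix (V j) (V (j + 1)) ℝ) (j : ℕ) :
    ∀ k, Matrix (V j) (V (j + k)) ℝ
  | 0 => (1 : Matrix (V j) (V j) ℝ)
  | k + 1 => segProd A j k * A (j + k)

section EuclideanNorm

open Matrix

variable {ι κ : Type} [Fintype ι] [Fintype κ]

lemma eNorm_eq_norm_toLp (x : ι → ℝ) : eNorm x = ‖WithLp.toLp 2 x‖ := by
  simp [eNorm, EuclideanSpace.norm_eq]

lemma eNorm_le_mul_eNorm_of_abs_le {x y : ι → ℝ} {c : ℝ} (hc : 0 ≤ c)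
    (h : ∀ i, |x i| ≤ c * y i) : eNorm x ≤ c * eNorm y := by
  rw [eNorm, eNorm, ← Real.sqrt_sq hc, ← Real.sqrt_mul (sq_nonneg c), Finset.mul_sum]
  gcongr with i
  rw [← mul_pow, ← sq_abs (x i)]
  exact pow_le_pow_left₀ (abs_nonneg _) (h i) 2

lemma eNorm_le_sqrt_card_mul {x : ι → ℝ} {t : ℝ} (ht : 0 ≤ t) (h : ∀ i, |x i| ≤ t) :
    eNorm x ≤ Real.sqrt (Fintype.card ι) * t := by
  have hone : eNorm (fun _ : ι => (1 : ℝ)) = Real.sqrt (Fintype.card ι) := by simp [eNorm]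
  have h1 := eNorm_le_mul_eNorm_of_abs_le (y := fun _ => 1) ht fun i => by simpa using h i
  rwa [hone, mul_comm] at h1

lemma l2opNorm_eq_norm [DecidableEq κ] (M : Matrix ι κ ℝ) :
    l2opNorm M = ‖LinearMap.toContinuousLinearMap (toLpLin 2 2 M)‖ := by
  rw [← ContinuousLinearMap.sSup_unitClosedBall_eq_norm, l2opNorm]
  congr 1
  ext c
  constructor
  · rintro ⟨x, hx, rfl⟩
    refine ⟨WithLp.toLp 2 x, ?_, ?_⟩
    · simpa [eNorm_eq_norm_toLp] using hx
    · simp [eNorm_eq_norm_toLp]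
  · rintro ⟨y, hy, rfl⟩
    refine ⟨y.ofLp, ?_, ?_⟩
    · simpa [eNorm_eq_norm_toLp] using hy
    · simp [eNorm_eq_norm_toLp, toLpLin_apply]

lemma l2opNorm_nonneg (M : Matrix ι κ ℝ) : 0 ≤ l2opNorm M := by
  classical
  exact l2opNorm_eq_norm M ▸ norm_nonneg _

lemma eNorm_mulVec_le (M : Matrix ι κ ℝ) (x : κ → ℝ) :
    eNorm (M *ᵥ x) ≤ l2opNorm M * eNorm x := by
  classical
  simpa [l2opNorm_eq_norm, eNorm_eq_norm_toLp] using
    (LinearMap.toContinuousLinearMap (toLpLin 2 2 M)).le_opNorm (WithLp.toLp 2 x)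

lemma eNorm_sub_mulVec_le {A B : Matrix ι κ ℝ} {ε : ℝ} (hε : 0 ≤ ε)
    (hAB : ∀ v w, |A v w - B v w| ≤ ε * A v w) {y : κ → ℝ} (hy : 0 ≤ y) :
    eNorm ((B - A) *ᵥ y) ≤ ε * eNorm (A *ᵥ y) := by
  refine eNorm_le_mul_eNorm_of_abs_le hε fun v => ?_
  calc |((B - A) *ᵥ y) v| = |∑ w, (B v w - A v w) * y w| := by
        simp [mulVec, dotProduct]
    _ ≤ ∑ w, |A v w - B v w| * y w := by
        refine (Finset.abs_sum_le_sum_abs _ _).trans_eq ?_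
        simp [abs_mul, abs_sub_comm, abs_of_nonneg (hy _)]
    _ ≤ ∑ w, ε * A v w * y w := by
        gcongr with w
        · exact hy w
        · exact hAB v w
    _ = ε * (A *ᵥ y) v := by
        simp [mulVec, dotProduct, Finset.mul_sum, mul_assoc]

lemma mul_mul_eNorm_le [Nonempty κ] {ψ p : κ → ℝ} (hψ : 0 ≤ ψ) (hp : ∀ w, 0 < p w)
    {ε P a b : ℝ} (hε : 0 < ε) (hP : 0 < P)
    (ha : ∀ w, ε * Real.sqrt (Fintype.card κ) * (p w)⁻¹ * P ≤ a)
    (hb : ∀ w, p w * ψ w ≤ b) :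
    P * (ε * eNorm ψ) ≤ a * b := by
  have hcard : 0 < Real.sqrt (Fintype.card κ) :=
    Real.sqrt_pos.2 (by exact_mod_cast Fintype.card_pos)
  have hd : 0 < ε * Real.sqrt (Fintype.card κ) * P := by positivity
  have hpoint : ∀ w, ψ w * (ε * Real.sqrt (Fintype.card κ) * P) ≤ a * b := fun w => by
    have hpw := hp w
    calc ψ w * (ε * Real.sqrt (Fintype.card κ) * P)
        = (ε * Real.sqrt (Fintype.card κ) * (p w)⁻¹ * P) * (p w * ψ w) := by
          field_simp
      _ ≤ a * b := mul_le_mul (ha w) (hb w) (mul_nonneg (hp w).le (hψ w))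
          ((by positivity : (0 : ℝ) ≤ _).trans (ha w))
  have hab : 0 ≤ a * b :=
    (mul_nonneg (hψ (Classical.arbitrary κ)) hd.le).trans (hpoint _)
  have hnorm := eNorm_le_sqrt_card_mul (div_nonneg hab hd.le) fun w => by
    rw [abs_of_nonneg (hψ w)]
    exact (le_div_iff₀ hd).2 (hpoint w)
  calc P * (ε * eNorm ψ) ≤ P * (ε * (Real.sqrt (Fintype.card κ) * (a * b / (ε *
        Real.sqrt (Fintype.card κ) * P)))) := by gcongr
    _ = a * b := by field_simp

lemma exists_eNorm_sub_lt_of_eNorm_sub_succ_le {x : ℕ → ι → ℝ} {C r : ℝ} (hr : r < 1)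
    (h : ∀ k, eNorm (x k - x (k + 1)) ≤ C * r ^ k) {δ : ℝ} (hδ : 0 < δ) :
    ∃ K0 : ℕ, ∀ k l, K0 ≤ k → K0 ≤ l → eNorm (x k - x l) < δ := by
  have hcauchy : CauchySeq fun k => WithLp.toLp 2 (x k) :=
    cauchySeq_of_le_geometric r C hr fun k => by
      simpa [dist_eq_norm, eNorm_eq_norm_toLp] using h k
  obtain ⟨K0, hK0⟩ := Metric.cauchySeq_iff.1 hcauchy δ hδ
  exact ⟨K0, fun k l hk hl => by
    simpa [dist_eq_norm, eNorm_eq_norm_toLp] using hK0 k hk l hl⟩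

end EuclideanNorm

lemma prod_range_add_le_prod_range {f g : ℕ → ℝ} (hf : ∀ i, 0 ≤ f i) (hfg : ∀ i, f i ≤ g i)
    (hg : ∀ i, 1 ≤ g i) (j k : ℕ) :
    ∏ i ∈ Finset.range k, f (j + i) ≤ ∏ i ∈ Finset.range (j + k), g i := by
  rw [Finset.prod_range_add]
  calc ∏ i ∈ Finset.range k, f (j + i) ≤ ∏ i ∈ Finset.range k, g (j + i) :=
        Finset.prod_le_prod (fun i _ => hf _) fun i _ => hfg _
    _ ≤ _ := le_mul_of_one_le_left (Finset.prod_nonneg fun i _ => (zero_le_one.trans (hg _)))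
        (Finset.one_le_prod fun i _ => hg i)

open Filter Topology in
lemma exists_pos_mul_le_of_pos {ι κ : Type} [Finite ι] [Finite κ] (P : Matrix ι κ ℝ)
    {Q : Matrix ι κ ℝ} (hQ : ∀ v w, 0 < Q v w) : ∃ c > 0, ∀ v w, c * P v w ≤ Q v w := by
  have hsmall : ∀ᶠ c in 𝓝[>] (0 : ℝ), ∀ v w, c * P v w ≤ Q v w := by
    simp only [eventually_all]
    intro v w
    have hlim : Tendsto (fun c : ℝ => c * P v w) (𝓝 0) (𝓝 (0 * P v w)) :=
      tendsto_id.mul_const _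
    rw [zero_mul] at hlim
    exact (hlim.mono_left nhdsWithin_le_nhds).eventually (eventually_le_nhds (hQ v w))
  obtain ⟨c, hc, hcpos⟩ := (hsmall.and self_mem_nhdsWithin).exists
  exact ⟨c, hcpos, hc⟩

section MatrixSystem

open Matrix

variable {V : ℕ → Type} [∀ n, Fintype (V n)] [∀ n, DecidableEq (V n)]

lemma prodUpTo_succ_apply (A : ∀ j, Matrix (V j) (V (j + 1)) ℝ) (k : ℕ) (v : V 0)
    (w : V (k + 1)) : prodUpTo V A (k + 1) v w = ∑ u, prodUpTo V A k v u * A k u w :=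
  mul_apply

lemma prodUpTo_nonneg {A : ∀ j, Matrix (V j) (V (j + 1)) ℝ} (hA : ∀ j v w, 0 ≤ A j v w) :
    ∀ k v w, 0 ≤ prodUpTo V A k v w
  | 0, v, w => by
    rw [prodUpTo, one_apply]
    split_ifs <;> norm_num
  | k + 1, v, w => by
    rw [prodUpTo_succ_apply]
    exact Finset.sum_nonneg fun u _ => mul_nonneg (prodUpTo_nonneg hA k v u) (hA k u w)

lemma mul_pow_mul_prodUpTo_le {A B : ∀ j, Matrix (V j) (V (j + 1)) ℝ}
    (hA : ∀ j v w, 0 ≤ A j v w) {N : ℕ} {r c : ℝ} (hr0 : 0 ≤ r) (hr1 : r ≤ 1) (hc : 0 ≤ c)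
    (hAB : ∀ j, N ≤ j → ∀ v w, r * A j v w ≤ B j v w)
    (hN : ∀ v w, c * prodUpTo V A N v w ≤ prodUpTo V B N v w) :
    ∀ M, N ≤ M → ∀ v w, c * r ^ M * prodUpTo V A M v w ≤ prodUpTo V B M v w := by
  intro M hM
  induction M, hM using Nat.le_induction with
  | base =>
    intro v w
    calc c * r ^ N * prodUpTo V A N v w ≤ c * 1 * prodUpTo V A N v w := by
          gcongr
          · exact prodUpTo_nonneg hA N v w
          · exact pow_le_one₀ hr0 hr1
      _ ≤ prodUpTo V B N v w := by simpa using hN v w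
  | succ M hNM ih =>
    intro v w
    rw [prodUpTo_succ_apply, prodUpTo_succ_apply, Finset.mul_sum]
    refine Finset.sum_le_sum fun u _ => ?_
    calc c * r ^ (M + 1) * (prodUpTo V A M v u * A M u w)
        = (c * r ^ M * prodUpTo V A M v u) * (r * A M u w) := by ring
      _ ≤ prodUpTo V B M v u * B M u w :=
          mul_le_mul (ih v u) (hAB M hNM u w) (mul_nonneg hr0 (hA M u w))
            ((mul_nonneg (mul_nonneg hc (pow_nonneg hr0 M)) (prodUpTo_nonneg hA M v u)).trans
              (ih v u))

lemma mulVec_eq_prodUpTo_mulVec_of_mem_limSet {B : ∀ j, Matrix (V j) (V (j + 1)) ℝ}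
    {φ : ∀ j, V j → ℝ} (hφ : φ ∈ limSet V B) : ∀ M, φ 0 = prodUpTo V B M *ᵥ φ M
  | 0 => (one_mulVec _).symm
  | M + 1 => by
    rw [prodUpTo, ← mulVec_mulVec, ← hφ.2 M]
    exact mulVec_eq_prodUpTo_mulVec_of_mem_limSet hφ M

lemma prodUpTo_mul_le_of_mem_limSet {B : ∀ j, Matrix (V j) (V (j + 1)) ℝ}
    (hB : ∀ j v w, 0 ≤ B j v w) {φ : ∀ j, V j → ℝ} (hφ : φ ∈ limSet V B) (M : ℕ) (v : V 0)
    (w : V M) : prodUpTo V B M v w * φ M w ≤ φ 0 v := by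
  rw [mulVec_eq_prodUpTo_mulVec_of_mem_limSet hφ M]
  exact Finset.single_le_sum (f := fun u => prodUpTo V B M v u * φ M u)
    (fun u _ => mul_nonneg (prodUpTo_nonneg hB M v u) (hφ.1 M u)) (Finset.mem_univ w)

lemma prodUpTo_mul_le_inv_mul_of_mem_limSet {B : ∀ j, Matrix (V j) (V (j + 1)) ℝ}
    (hB : ∀ j v w, 0 ≤ B j v w) {φ : ∀ j, V j → ℝ} (hφ : φ ∈ limSet V B) {M : ℕ} {v : V 0}
    {P : Matrix (V 0) (V M) ℝ} {d : ℝ} (hd : 0 < d) (hP : ∀ w, d * P v w ≤ prodUpTo V B M v w)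
    (w : V M) : P v w * φ M w ≤ d⁻¹ * φ 0 v := by
  rw [← div_eq_inv_mul, le_div_iff₀ hd, mul_right_comm, mul_comm _ d]
  exact (mul_le_mul_of_nonneg_right (hP w) (hφ.1 M w)).trans
    (prodUpTo_mul_le_of_mem_limSet hB hφ M v w)

lemma eNorm_segProd_mulVec_le (A : ∀ j, Matrix (V j) (V (j + 1)) ℝ) (j : ℕ) :
    ∀ k (z : V (j + k) → ℝ),
      eNorm (segProd V A j k *ᵥ z) ≤ (∏ i ∈ Finset.range k, l2opNorm (A (j + i))) * eNorm z
  | 0, z => by simp [segProd]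
  | k + 1, z => by
    rw [segProd, ← mulVec_mulVec, Finset.prod_range_succ, mul_assoc]
    refine (eNorm_segProd_mulVec_le A j k _).trans ?_
    gcongr
    · exact Finset.prod_nonneg fun i _ => l2opNorm_nonneg _
    · exact eNorm_mulVec_le _ _

lemma eNorm_segProd_mulVec_sub_succ_le {A B : ∀ j, Matrix (V j) (V (j + 1)) ℝ} {j k : ℕ}
    {ε : ℝ} (hε : 0 ≤ ε) (hAB : ∀ v w, |A (j + k) v w - B (j + k) v w| ≤ ε * A (j + k) v w)
    {y : V (j + k + 1) → ℝ} (hy : 0 ≤ y) :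
    eNorm (segProd V A j k *ᵥ (B (j + k) *ᵥ y) - segProd V A j (k + 1) *ᵥ y) ≤
      (∏ i ∈ Finset.range (j + k + 1), (2 * l2opNorm (A i) + 1)) * (ε * eNorm y) := by
  have hdiff : segProd V A j k *ᵥ (B (j + k) *ᵥ y) - segProd V A j (k + 1) *ᵥ y
      = segProd V A j k *ᵥ ((B (j + k) - A (j + k)) *ᵥ y) := by
    rw [segProd, ← mulVec_mulVec, ← mulVec_sub, sub_mulVec]
  have hprod : ∏ i ∈ Finset.range (k + 1), l2opNorm (A (j + i))
      ≤ ∏ i ∈ Finset.range (j + k + 1), (2 * l2opNorm (A i) + 1) :=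
    prod_range_add_le_prod_range (fun i => l2opNorm_nonneg _)
      (fun i => by linarith [l2opNorm_nonneg (A i)])
      (fun i => by linarith [l2opNorm_nonneg (A i)]) j (k + 1)
  rw [hdiff]
  calc _ ≤ (∏ i ∈ Finset.range k, l2opNorm (A (j + i))) * eNorm ((B (j + k) - A (j + k)) *ᵥ y) :=
        eNorm_segProd_mulVec_le A j k _
    _ ≤ (∏ i ∈ Finset.range k, l2opNorm (A (j + i))) * (ε * (l2opNorm (A (j + k)) * eNorm y)) := by
        gcongr
        · exact Finset.prod_nonneg fun i _ => l2opNorm_nonneg _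
        · exact (eNorm_sub_mulVec_le hε hAB hy).trans
            (mul_le_mul_of_nonneg_left (eNorm_mulVec_le _ _) hε)
    _ = (∏ i ∈ Finset.range (k + 1), l2opNorm (A (j + i))) * (ε * eNorm y) := by
        rw [Finset.prod_range_succ]; ring
    _ ≤ _ := by
        gcongr
        exact mul_nonneg hε (Real.sqrt_nonneg _)

end MatrixSystem

/-- Under the hypotheses of the perturbation lemma, for every `φ` in the inverse limit of
`{B^{(j)}}` and every `j ≥ N` the sequence `k ↦ A^{(j)} ⋯ A^{(j+k)} φ^{j+k}` is Cauchy,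
consecutive terms differing by at most `K_N 2^{-(j+k+1)} φ^0`. -/
theorem stmt_4 (A B : ∀ j, Matrix (V j) (V (j + 1)) ℝ)
    (hA : ∀ j v w, 0 ≤ A j v w)
    (hApos : ∀ k (v0 : V 0) (w : V k), prodUpTo V A k v0 w ≠ 0)
    (hB : ∀ j v w, 0 ≤ B j v w)
    (hBpos : ∀ k (v0 : V 0) (w : V k), prodUpTo V B k v0 w ≠ 0)
    (ε : ℕ → ℝ) (hε : ∀ j, 0 < ε j ∧ ε j < 1 / 2)
    (hbound : ∀ (j : ℕ) (v0 : V 0) (w : V (j + 1)),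
      ε j * Real.sqrt (Fintype.card (V (j + 1))) * (prodUpTo V A (j + 1) v0 w)⁻¹ *
          ∏ k ∈ Finset.range (j + 1), (2 * l2opNorm (A k) + 1) ≤ (1 / 4 : ℝ) ^ (j + 1))
    (N : ℕ)
    (hpert : ∀ j, N ≤ j → ∀ v w, |A j v w - B j v w| ≤ ε j * A j v w) :
    ∃ K : ℝ, 0 < K ∧
      ∀ (φ : ∀ j, V j → ℝ), φ ∈ limSet V B → ∀ (v0 : V 0) (j : ℕ), N ≤ j →
        (∀ k : ℕ,
          eNorm ((segProd V A j (k + 1)).mulVec (φ (j + (k + 1))) -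
              (segProd V A j (k + 2)).mulVec (φ (j + (k + 2)))) ≤
            K * (1 / 2 : ℝ) ^ (j + k + 1) * φ 0 v0) ∧
        ∀ δ : ℝ, 0 < δ → ∃ K0 : ℕ, ∀ k l : ℕ, K0 ≤ k → K0 ≤ l →
          eNorm ((segProd V A j k).mulVec (φ (j + k)) -
              (segProd V A j l).mulVec (φ (j + l))) < δ := by
  have hAprod k v w : 0 < prodUpTo V A k v w := (prodUpTo_nonneg hA k v w).lt_of_ne' (hApos k v w)
  have hBprod k v w : 0 < prodUpTo V B k v w := (prodUpTo_nonneg hB k v w).lt_of_ne' (hBpos k v w)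
  have hhalf j (hj : N ≤ j) v w : 1 / 2 * A j v w ≤ B j v w := by
    nlinarith [(abs_le.1 (hpert j hj v w)).2, (hε j).2, hA j v w]
  obtain ⟨c, hc, hcN⟩ := exists_pos_mul_le_of_pos (prodUpTo V A N) (hBprod N)
  have hcomp := mul_pow_mul_prodUpTo_le hA (by norm_num) (by norm_num) hc.le hhalf hcN
  refine ⟨(2 * c)⁻¹, by positivity, fun φ hφ v0 j hj => ?_⟩
  have hcons k : eNorm ((segProd V A j k).mulVec (φ (j + k)) -
      (segProd V A j (k + 1)).mulVec (φ (j + k + 1)))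
      ≤ c⁻¹ * (1 / 2 : ℝ) ^ (j + k + 1) * φ 0 v0 := by
    rw [hφ.2 (j + k)]
    refine (eNorm_segProd_mulVec_sub_succ_le (hε _).1.le (hpert (j + k) (by omega))
      (hφ.1 _)).trans ((mul_mul_eNorm_le (hφ.1 _) (hAprod _ v0) (hε _).1
        (Finset.prod_pos fun i _ => by linarith [l2opNorm_nonneg (A i)]) (hbound (j + k) v0)
        (prodUpTo_mul_le_inv_mul_of_mem_limSet hB hφ (by positivity)
          (hcomp _ (by omega) v0))).trans_eq ?_)
    rw [show (1 / 4 : ℝ) = 1 / 2 * (1 / 2) by norm_num, mul_pow]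
    field_simp
  exact ⟨fun k => (hcons (k + 1)).trans_eq (by ring), fun δ hδ =>
    exists_eNorm_sub_lt_of_eNorm_sub_succ_le (C := c⁻¹ * (1 / 2) ^ (j + 1) * φ 0 v0)
      (r := 1 / 2) (by norm_num) (fun k => (hcons k).trans_eq (by ring)) hδ⟩
end

section
/- Let Br be a Bratteli diagram with potential F, and fix j ≥ 1. For μ ∈ P_j not lying in the geodesic set G_j (i.e. μ is not an initial segment pattern of any F-geodesic up to level j in Br^+), there exists k ≥ j such that every path ν of length k from the root extending μ satisfies F(ν) > min{F(ν') : ν' ∈ P_k, r(ν') = r(ν)}; i.e. ν is not F-minimizing among paths with the same range. -/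
open scoped BigOperators

/-- A Bratteli diagram: finite nonempty level sets `V n`, arrows `E n` from level `n`
to level `n+1`, a single root at level `0`, no sinks, and no sources besides the root. -/
structure Bratteli where
  V : ℕ → Type
  E : ℕ → Type
  instVFin : ∀ n, Fintype (V n)
  instEFin : ∀ n, Fintype (E n)
  instVNe : ∀ n, Nonempty (V n)
  instRoot : Subsingleton (V 0)
  src : ∀ n, E n → V n
  rng : ∀ n, E n → V (n + 1)
  noSink : ∀ n (v : V n), ∃ e : E n, src n e = v
  noSource : ∀ n (v : V (n + 1)), ∃ e : E n, rng n e = v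

attribute [instance] Bratteli.instVFin Bratteli.instEFin Bratteli.instVNe Bratteli.instRoot

/-- Finite paths of length `n` starting at the root. -/
abbrev Bratteli.FinPath (B : Bratteli) (n : ℕ) :=
  { p : ∀ i : Fin n, B.E i.val //
    ∀ (i : ℕ) (h : i + 1 < n),
      B.rng i (p ⟨i, Nat.lt_of_succ_lt h⟩) = B.src (i + 1) (p ⟨i + 1, h⟩) }

/-- Infinite paths starting at the root. -/
structure Bratteli.InfPath (B : Bratteli) where
  arrow : ∀ n, B.E n
  compat : ∀ n, B.rng n (arrow n) = B.src (n + 1) (arrow (n + 1))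

/-- The initial segment `p[1,n]` of an infinite path. -/
def Bratteli.InfPath.take {B : Bratteli} (p : B.InfPath) (n : ℕ) : B.FinPath n :=
  ⟨fun i => p.arrow i.val, fun i _ => p.compat i⟩

/-- The endpoint (range) of a finite path of positive length. -/
def pend {B : Bratteli} {n : ℕ} (μ : B.FinPath (n + 1)) : B.V (n + 1) :=
  B.rng n (μ.1 ⟨n, Nat.lt_succ_self n⟩)

/-- The vertex at level `n` through which a path of length `n+1` passes. -/
def through {B : Bratteli} {n : ℕ} (μ : B.FinPath (n + 1)) : B.V n :=
  B.src n (μ.1 ⟨n, Nat.lt_succ_self n⟩)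

/-- The value `F(μ) = Σ_i F(a_i)` of a potential on a finite path. -/
noncomputable def pathVal {B : Bratteli} (F : ∀ n, B.E n → ℝ) {n : ℕ}
    (μ : B.FinPath n) : ℝ :=
  ∑ i : Fin n, F i.val (μ.1 i)

/-- An infinite path `p` from the root is an `F`-geodesic when for every `n`,
`F(p[1,n]) ≤ F(μ)` for every length-`n` path `μ` from the root with the same endpoint. -/
def IsGeodesic {B : Bratteli} (F : ∀ n, B.E n → ℝ) (p : B.InfPath) : Prop :=
  ∀ (n : ℕ) (μ : B.FinPath (n + 1)), pend μ = pend (p.take (n + 1)) →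
    pathVal F (p.take (n + 1)) ≤ pathVal F μ

/-- `ν` extends `μ`: the first `j` arrows of `ν` are those of `μ`. -/
def Extends {B : Bratteli} {j k : ℕ} (h : j ≤ k) (ν : B.FinPath k) (μ : B.FinPath j) : Prop :=
  ∀ i : Fin j, ν.1 ⟨i.1, lt_of_lt_of_le i.2 h⟩ = μ.1 i

/-! If every `k ≥ j` admitted an `F`-minimizing extension of `μ` of length `k + 1`, the prefixes
of these extensions would form an infinite, finitely branching tree, and König's lemma would give
an infinite path through `μ` all of whose prefixes are prefixes of minimizing paths. A prefix of a
minimizing path is minimizing (otherwise replacing it by a cheaper path with the same range would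
lower the whole path), so that infinite path is an `F`-geodesic. -/

namespace Bratteli

variable {B : Bratteli}

def FinPath.trunc {m n : ℕ} (h : m ≤ n) (ν : B.FinPath n) : B.FinPath m :=
  ⟨fun i => ν.1 ⟨i.1, i.2.trans_le h⟩, fun i hi => ν.2 i (hi.trans_le h)⟩

lemma extends_iff_trunc_eq {j k : ℕ} (h : j ≤ k) (ν : B.FinPath k) (μ : B.FinPath j) :
    Extends h ν μ ↔ ν.trunc h = μ := by
  rw [Subtype.ext_iff, funext_iff]
  rfl

def FinPath.snoc {n : ℕ} (ν : B.FinPath (n + 1)) (e : B.E (n + 1))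
    (he : pend ν = B.src (n + 1) e) : B.FinPath (n + 2) :=
  ⟨Fin.snoc (α := fun i : Fin (n + 2) => B.E i.val) ν.1 e, by
    intro i hi
    rcases Nat.lt_succ_iff_lt_or_eq.mp (Nat.lt_of_succ_lt_succ hi) with hi | rfl
    · have hi' : i + 1 < n + 1 := by omega
      simpa [Fin.snoc, hi', Nat.lt_of_succ_lt hi'] using ν.2 i hi'
    · simpa [Fin.snoc, pend] using he⟩

@[simp]
lemma FinPath.pend_snoc {n : ℕ} (ν : B.FinPath (n + 1)) (e : B.E (n + 1))
    (he : pend ν = B.src (n + 1) e) : pend (ν.snoc e he) = B.rng (n + 1) e := by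
  simp [FinPath.snoc, pend, Fin.snoc]

variable (F : ∀ n, B.E n → ℝ)

lemma pathVal_snoc {n : ℕ} (ν : B.FinPath (n + 1)) (e : B.E (n + 1))
    (he : pend ν = B.src (n + 1) e) : pathVal F (ν.snoc e he) = pathVal F ν + F (n + 1) e := by
  simp [pathVal, FinPath.snoc, Fin.sum_univ_castSucc]

lemma pathVal_eq_pathVal_trunc_add {n : ℕ} (ν : B.FinPath (n + 2)) :
    pathVal F ν = pathVal F (ν.trunc (Nat.le_succ _)) + F (n + 1) (ν.1 (Fin.last _)) :=
  Fin.sum_univ_castSucc _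

def IsMinimizing {n : ℕ} (ν : B.FinPath (n + 1)) : Prop :=
  ∀ ν' : B.FinPath (n + 1), pend ν' = pend ν → pathVal F ν ≤ pathVal F ν'

variable {F}

lemma IsMinimizing.trunc_succ {n : ℕ} {ν : B.FinPath (n + 2)} (hν : IsMinimizing F ν) :
    IsMinimizing F (ν.trunc (Nat.le_succ _)) := by
  intro ν' hν'
  have hle := hν (ν'.snoc (ν.1 (Fin.last _)) (hν'.trans (ν.2 n _))) (FinPath.pend_snoc _ _ _)
  rw [pathVal_snoc, pathVal_eq_pathVal_trunc_add F ν] at hle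
  linarith

lemma IsMinimizing.trunc {m k : ℕ} (h : m ≤ k) {ν : B.FinPath (k + 1)} (hν : IsMinimizing F ν) :
    IsMinimizing F (ν.trunc (Nat.succ_le_succ h)) := by
  induction k, h using Nat.le_induction with
  | base => exact hν
  | succ k _ ih => exact ih hν.trunc_succ

lemma isMinimizing_of_le_sInf {n : ℕ} {ν : B.FinPath (n + 1)}
    (hν : pathVal F ν ≤ sInf {x | ∃ ν' : B.FinPath (n + 1), pend ν' = pend ν ∧ pathVal F ν' = x}) :
    IsMinimizing F ν := fun ν' hν' =>
  hν.trans <| csInf_le ((Set.finite_range fun ν' : B.FinPath (n + 1) => pathVal F ν').subset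
    (by rintro _ ⟨ν', -, rfl⟩; exact ⟨ν', rfl⟩)).bddBelow ⟨ν', hν', rfl⟩

theorem exists_infPath_forall_take (P : ∀ n, B.FinPath n → Prop)
    (hP : ∀ {m n} (h : m ≤ n) (ν : B.FinPath n), P n ν → P m (ν.trunc h))
    (hne : ∀ n, ∃ ν, P n ν) : ∃ p : B.InfPath, ∀ n, P n (p.take n) := by
  let α n := {ν : B.FinPath n // P n ν}
  have : ∀ n, Nonempty (α n) := fun n => let ⟨ν, hν⟩ := hne n; ⟨⟨ν, hν⟩⟩
  obtain ⟨f, hf⟩ := exists_seq_forall_proj_of_forall_finite (α := α)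
    (fun h s => ⟨s.1.trunc h, hP h s.1 s.2⟩) (fun _ _ => rfl) (fun _ _ _ _ _ _ => rfl)
    (fun _ _ => Set.toFinite _)
  have harrow : ∀ {m n} (h : m ≤ n) (i : Fin m), (f m).1.1 i = (f n).1.1 ⟨i, i.2.trans_le h⟩ :=
    fun h i => by rw [← hf h]; rfl
  let p : B.InfPath :=
    ⟨fun n => (f (n + 1)).1.1 (Fin.last n), fun n => by
      rw [harrow (Nat.le_succ (n + 1)) (Fin.last n)]
      exact (f (n + 2)).1.2 n (by omega)⟩
  have hp : ∀ n, p.take n = (f n).1 := fun n => Subtype.ext <| funext fun i => harrow i.2 _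
  exact ⟨p, fun n => hp n ▸ (f n).2⟩

theorem exists_geodesic_of_forall_isMinimizing_extends {j : ℕ} (μ : B.FinPath (j + 1))
    (h : ∀ k (hk : j ≤ k), ∃ ν : B.FinPath (k + 1),
      Extends (Nat.succ_le_succ hk) ν μ ∧ IsMinimizing F ν) :
    ∃ p : B.InfPath, IsGeodesic F p ∧ p.take (j + 1) = μ := by
  obtain ⟨p, hp⟩ := exists_infPath_forall_take
    (fun n ν => ∃ k, ∃ (hjk : j ≤ k) (hnk : n ≤ k + 1) (ν' : B.FinPath (k + 1)),
      ν'.trunc (Nat.succ_le_succ hjk) = μ ∧ IsMinimizing F ν' ∧ ν'.trunc hnk = ν)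
    (by
      rintro m n hmn - ⟨k, hjk, hnk, ν', hμ, hν', rfl⟩
      exact ⟨k, hjk, hmn.trans hnk, ν', hμ, hν', rfl⟩)
    (fun n => by
      obtain ⟨ν, hext, hν⟩ := h (max j n) (le_max_left _ _)
      exact ⟨_, max j n, le_max_left _ _, by omega, ν, (extends_iff_trunc_eq _ ν μ).mp hext, hν,
        rfl⟩)
  refine ⟨p, fun n => ?_, ?_⟩
  · obtain ⟨k, _, hnk, ν', _, hν', htake⟩ := hp (n + 1)
    exact htake ▸ hν'.trunc (Nat.le_of_succ_le_succ hnk)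
  · obtain ⟨k, _, _, ν', hμ, _, htake⟩ := hp (j + 1)
    exact htake.symm.trans hμ

end Bratteli

/-- If a finite path `μ` from the root is not an initial segment of any `F`-geodesic,
then there is `k ≥ |μ|` such that every length-`k` extension `ν` of `μ` fails to be
`F`-minimizing among the paths with the same range. -/
theorem stmt_15 (B : Bratteli) (F : ∀ n, B.E n → ℝ) (j : ℕ) (μ : B.FinPath (j + 1))
    (hμ : ¬∃ p : B.InfPath, IsGeodesic F p ∧ p.take (j + 1) = μ) :
    ∃ k : ℕ, ∃ hk : j ≤ k, ∀ ν : B.FinPath (k + 1),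
      Extends (Nat.succ_le_succ hk) ν μ →
        sInf {x | ∃ ν' : B.FinPath (k + 1), pend ν' = pend ν ∧ pathVal F ν' = x} <
          pathVal F ν := by
  by_contra! h
  refine hμ (Bratteli.exists_geodesic_of_forall_isMinimizing_extends μ fun k hk => ?_)
  obtain ⟨ν, hext, hν⟩ := h k hk
  exact ⟨ν, hext, Bratteli.isMinimizing_of_le_sInf hν⟩
end
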